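/- arXiv:1212.0294 — 6 statements merged into one kernel-verified Lean document; each statement's English description precedes it below -/
import Mathlib

section
/- Let d be a positive non-square integer with d ≢ 1 (mod 4), and let √d = [a_0; a_1, a_2, …] be its simple continued fraction expansion, with n-th convergent p_n/q_n = [a_0; a_1, …, a_n] (in lowest terms, with the convention q_{−1} = 0) and n-th total quotient α_n = [a_n; a_{n+1}, a_{n+2}, …]. Set ν_n = |p_n² − d·q_n²|. Then for every n ≥ 0 there is a real number δ_n with α_{n+1} = 2√d/ν_n − q_{n−1}/q_n + δ_n and |δ_n| < 4/(2√d·q_n²); in particular α_{n+1} < 2√d/ν_n for every n ≥ 0. -/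
/-!
Write `e_m = p_m - q_m θ` for the error of the `m`-th convergent. The recursions for `p`, `q` and
`α` give `α_{m+1} e_{m+1} = -e_m`, and together with `p_{m+1} q_m - p_m q_{m+1} = ±1` this yields
`e_m (α_{m+1} q_m + q_{m-1}) = (-1)^{m+1}`. For `θ = √d` one has
`p_m² - d q_m² = e_m (e_m + 2 q_m √d)`, and solving the previous identity for `α_{m+1}` gives the
expansion with `δ_m = (-1)^{m+1} / (q_m (e_m + 2 q_m √d))`. Since `|e_m| < 1` this is smaller
than `q_{m-1}/q_m` in absolute value (except for `m = 0`, where it is negative), whence the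
inequality.
-/

/-- The `n`-th total quotient `α_n` of the continued fraction expansion of `θ`:
`α_0 = θ`, `α_{n+1} = 1/(α_n - ⌊α_n⌋)`. -/
noncomputable def cfAlpha (θ : ℝ) : ℕ → ℝ
  | 0 => θ
  | n + 1 => 1 / Int.fract (cfAlpha θ n)

/-- The `n`-th partial quotient `a_n` of the continued fraction expansion of `θ`. -/
noncomputable def cfA (θ : ℝ) (n : ℕ) : ℤ := ⌊cfAlpha θ n⌋

/-- Numerators of the convergents of `θ`, shifted by two:
`cfP θ (n+2) = p_n`, with `p_{-2} = 0`, `p_{-1} = 1`, `p_n = a_n p_{n-1} + p_{n-2}`. -/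
noncomputable def cfP (θ : ℝ) : ℕ → ℤ
  | 0 => 0
  | 1 => 1
  | n + 2 => cfA θ n * cfP θ (n + 1) + cfP θ n

/-- Denominators of the convergents of `θ`, shifted by two:
`cfQ θ (n+2) = q_n`, with `q_{-2} = 1`, `q_{-1} = 0`, `q_n = a_n q_{n-1} + q_{n-2}`. -/
noncomputable def cfQ (θ : ℝ) : ℕ → ℤ
  | 0 => 1
  | 1 => 0
  | n + 2 => cfA θ n * cfQ θ (n + 1) + cfQ θ n

/-- Shifted like `cfP` and `cfQ`: `cfErr θ (m + 2) = p_m - q_m θ`. -/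
noncomputable def cfErr (θ : ℝ) (n : ℕ) : ℝ := cfP θ n - cfQ θ n * θ

section ContinuedFraction

variable {θ : ℝ}

theorem irrational_cfAlpha (hθ : Irrational θ) (n : ℕ) : Irrational (cfAlpha θ n) := by
  induction n with
  | zero => exact hθ
  | succ n ih =>
    rw [cfAlpha, one_div]
    exact (ih.sub_intCast ⌊cfAlpha θ n⌋).inv

theorem fract_cfAlpha_pos (hθ : Irrational θ) (n : ℕ) : 0 < Int.fract (cfAlpha θ n) :=
  Int.fract_pos.2 ((irrational_cfAlpha hθ n).ne_int _)

theorem one_lt_cfAlpha_succ (hθ : Irrational θ) (n : ℕ) : 1 < cfAlpha θ (n + 1) := by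
  rw [cfAlpha, lt_div_iff₀ (fract_cfAlpha_pos hθ n), one_mul]
  exact Int.fract_lt_one _

theorem one_le_cfA_succ (hθ : Irrational θ) (n : ℕ) : 1 ≤ cfA θ (n + 1) :=
  Int.le_floor.2 (by exact_mod_cast (one_lt_cfAlpha_succ hθ n).le)

theorem one_le_cfQ (hθ : Irrational θ) (n : ℕ) : 1 ≤ cfQ θ (n + 2) := by
  induction n using Nat.strong_induction_on with
  | _ n ih =>
    match n, ih with
    | 0, _ => simp [cfQ]
    | 1, _ => simpa [cfQ] using one_le_cfA_succ hθ 0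
    | k + 2, ih =>
      have hk := ih k (by omega)
      have hk1 := ih (k + 1) (by omega)
      rw [cfQ]
      nlinarith [one_le_cfA_succ hθ (k + 1)]

theorem cfQ_nonneg (hθ : Irrational θ) : ∀ n, 0 ≤ cfQ θ n
  | 0 => zero_le_one
  | 1 => le_rfl
  | n + 2 => zero_le_one.trans (one_le_cfQ hθ n)

theorem cfP_mul_cfQ_sub_cfP_mul_cfQ (θ : ℝ) (n : ℕ) :
    cfP θ (n + 1) * cfQ θ n - cfP θ n * cfQ θ (n + 1) = (-1) ^ n := by
  induction n with
  | zero => simp [cfP, cfQ]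
  | succ n ih =>
    rw [cfP, cfQ, pow_succ]
    linear_combination -ih

theorem cfAlpha_mul_cfErr_succ (hθ : Irrational θ) (n : ℕ) :
    cfAlpha θ n * cfErr θ (n + 1) = -cfErr θ n := by
  induction n with
  | zero => simp [cfAlpha, cfErr, cfP, cfQ]
  | succ n ih =>
    have hα : cfAlpha θ (n + 1) * (cfAlpha θ n - cfA θ n) = 1 := by
      rw [cfAlpha, ← Int.self_sub_floor]
      exact one_div_mul_cancel (fract_cfAlpha_pos hθ n).ne'
    simp only [cfErr, cfP, cfQ] at ih ⊢
    push_cast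
    linear_combination cfAlpha θ (n + 1) * ih - (cfP θ (n + 1) - cfQ θ (n + 1) * θ) * hα

theorem cfErr_succ_mul (hθ : Irrational θ) (n : ℕ) :
    cfErr θ (n + 1) * (cfAlpha θ n * cfQ θ (n + 1) + cfQ θ n) = (-1) ^ n := by
  have hdet : ((cfP θ (n + 1) * cfQ θ n - cfP θ n * cfQ θ (n + 1) : ℤ) : ℝ) = (-1) ^ n := by
    exact_mod_cast cfP_mul_cfQ_sub_cfP_mul_cfQ θ n
  have hrec := cfAlpha_mul_cfErr_succ hθ n
  push_cast at hdet
  simp only [cfErr] at hrec ⊢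
  linear_combination hdet + cfQ θ (n + 1) * hrec

end ContinuedFraction

theorem abs_eq_one_div_of_mul_eq {e r s : ℝ} (hr : 0 < r) (hs : |s| = 1) (he : e * r = s) :
    |e| = 1 / r := by
  rw [eq_div_iff hr.ne', ← hs, ← he, abs_mul, abs_of_pos hr]

theorem abs_lt_one_of_mul_eq {e r s : ℝ} (hr : 1 < r) (hs : |s| = 1) (he : e * r = s) :
    |e| < 1 := by
  rw [abs_eq_one_div_of_mul_eq (by linarith) hs he, div_lt_one (by linarith)]
  exact hr

/-- Here `e + 2 q θ` plays the role of `p + q √d`, so that `|e| (e + 2 q θ) = |p² - d q²|`. -/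
theorem eq_two_mul_div_sub_add_of_mul_eq {θ α q q' e s : ℝ} (hθ : 1 < θ) (hq : 1 ≤ q)
    (hr : 1 < α * q + q') (hs : |s| = 1) (he : e * (α * q + q') = s) :
    α = 2 * θ / (|e| * (e + 2 * q * θ)) - q' / q + s / (q * (e + 2 * q * θ)) ∧
      |s / (q * (e + 2 * q * θ))| < 4 / (2 * θ * q ^ 2) := by
  have he1 := abs_lt_one_of_mul_eq hr hs he
  have hD : 1 < e + 2 * q * θ := by nlinarith [neg_abs_le e]
  constructor
  · have hq0 : q ≠ 0 := by positivity
    have hD0 : e + 2 * θ * q ≠ 0 := by nlinarith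
    have hr0 : α * q + q' ≠ 0 := by positivity
    rw [abs_eq_one_div_of_mul_eq (by linarith) hs he]
    field_simp
    linear_combination he
  · rw [abs_div, hs, abs_of_pos (by positivity), div_lt_div_iff₀ (by positivity) (by positivity)]
    nlinarith [neg_abs_le e]

theorem lt_two_mul_div_of_mul_eq {θ α q q' e s : ℝ} (hθ : 1 < θ) (hq : 1 ≤ q) (hq' : 0 ≤ q')
    (hr : 1 < α * q + q') (hs : |s| = 1) (he : e * (α * q + q') = s)
    (hsign : 1 ≤ q' ∨ s < 0) :
    α < 2 * θ / (|e| * (e + 2 * q * θ)) := by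
  have hD : 1 < e + 2 * q * θ := by nlinarith [neg_abs_le e, abs_lt_one_of_mul_eq hr hs he]
  have hδ : s / (q * (e + 2 * q * θ)) < q' / q := by
    rw [div_lt_div_iff₀ (by positivity) (by positivity)]
    rcases hsign with hq'1 | hs0
    · nlinarith [le_abs_self s, mul_lt_mul_of_pos_left hD (by linarith : 0 < q)]
    · nlinarith [mul_nonneg hq' (by positivity : (0 : ℝ) ≤ q * (e + 2 * q * θ))]
  linarith [(eq_two_mul_div_sub_add_of_mul_eq hθ hq hr hs he).1]

theorem intCast_sq_sub_mul_sq_eq_mul {d : ℕ} (p q : ℤ) :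
    ((p ^ 2 - (d : ℤ) * q ^ 2 : ℤ) : ℝ) = (p - q * √d) * ((p - q * √d) + 2 * q * √d) := by
  push_cast
  linear_combination (q : ℝ) ^ 2 * Real.sq_sqrt (Nat.cast_nonneg d)

theorem stmt_0_general (d : ℕ) (hns : ¬ IsSquare d) (n : ℕ) :
    (∃ δ : ℝ,
        cfAlpha (Real.sqrt d) (n + 1) =
          2 * Real.sqrt d /
              ((|cfP (Real.sqrt d) (n + 2) ^ 2 - (d : ℤ) * cfQ (Real.sqrt d) (n + 2) ^ 2| : ℤ) : ℝ)
            - (cfQ (Real.sqrt d) (n + 1) : ℝ) / (cfQ (Real.sqrt d) (n + 2) : ℝ) + δ ∧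
        |δ| < 4 / (2 * Real.sqrt d * (cfQ (Real.sqrt d) (n + 2) : ℝ) ^ 2)) ∧
    cfAlpha (Real.sqrt d) (n + 1) <
      2 * Real.sqrt d /
        ((|cfP (Real.sqrt d) (n + 2) ^ 2 - (d : ℤ) * cfQ (Real.sqrt d) (n + 2) ^ 2| : ℤ) : ℝ) := by
  set θ := √(d : ℝ)
  have hirr : Irrational θ := irrational_sqrt_natCast_iff.2 hns
  have hθ : 1 < θ := by
    have : d ≠ 0 ∧ d ≠ 1 := ⟨fun h => hns (h ▸ ⟨0, rfl⟩), fun h => hns (h ▸ ⟨1, rfl⟩)⟩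
    exact Real.lt_sqrt_of_sq_lt (by norm_cast; omega)
  have hq : (1 : ℝ) ≤ cfQ θ (n + 2) := by exact_mod_cast one_le_cfQ hirr n
  have hq' : (0 : ℝ) ≤ cfQ θ (n + 1) := by exact_mod_cast cfQ_nonneg hirr (n + 1)
  have hr : 1 < cfAlpha θ (n + 1) * cfQ θ (n + 2) + cfQ θ (n + 1) := by
    nlinarith [one_lt_cfAlpha_succ hirr n]
  have hs : |(-1 : ℝ) ^ (n + 1)| = 1 := by simp
  have he := cfErr_succ_mul hirr (n + 1)
  have hν : ((|cfP θ (n + 2) ^ 2 - (d : ℤ) * cfQ θ (n + 2) ^ 2| : ℤ) : ℝ)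
      = |cfErr θ (n + 2)| * (cfErr θ (n + 2) + 2 * cfQ θ (n + 2) * θ) := by
    have hD : 0 < cfErr θ (n + 2) + 2 * cfQ θ (n + 2) * θ := by
      nlinarith [neg_abs_le (cfErr θ (n + 2)), abs_lt_one_of_mul_eq hr hs he]
    rw [Int.cast_abs, intCast_sq_sub_mul_sq_eq_mul, abs_mul, ← abs_of_pos hD]
    rfl
  have hsign : 1 ≤ (cfQ θ (n + 1) : ℝ) ∨ (-1 : ℝ) ^ (n + 1) < 0 := by
    rcases n with _ | k
    · right; norm_num
    · left; exact_mod_cast one_le_cfQ hirr k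
  rw [hν]
  exact ⟨⟨_, eq_two_mul_div_sub_add_of_mul_eq hθ hq hr hs he⟩,
    lt_two_mul_div_of_mul_eq hθ hq hq' hr hs he hsign⟩

/-- for a positive non-square integer `d` with `d ≢ 1 (mod 4)`,
with `ν_n = |p_n² - d q_n²|`, for every `n ≥ 0` there is `δ_n` with
`α_{n+1} = 2√d/ν_n - q_{n-1}/q_n + δ_n`, `|δ_n| < 4/(2√d q_n²)`;
in particular `α_{n+1} < 2√d/ν_n`. -/
theorem stmt_0 (d : ℕ) (hd : 0 < d) (hns : ¬ IsSquare d) (hd4 : d % 4 ≠ 1) (n : ℕ) :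
    (∃ δ : ℝ,
        cfAlpha (Real.sqrt d) (n + 1) =
          2 * Real.sqrt d /
              ((|cfP (Real.sqrt d) (n + 2) ^ 2 - (d : ℤ) * cfQ (Real.sqrt d) (n + 2) ^ 2| : ℤ) : ℝ)
            - (cfQ (Real.sqrt d) (n + 1) : ℝ) / (cfQ (Real.sqrt d) (n + 2) : ℝ) + δ ∧
        |δ| < 4 / (2 * Real.sqrt d * (cfQ (Real.sqrt d) (n + 2) : ℝ) ^ 2)) ∧
    cfAlpha (Real.sqrt d) (n + 1) <
      2 * Real.sqrt d /
        ((|cfP (Real.sqrt d) (n + 2) ^ 2 - (d : ℤ) * cfQ (Real.sqrt d) (n + 2) ^ 2| : ℤ) : ℝ) :=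
  stmt_0_general d hns n
end

section
/- Let a_1, …, a_m be positive integers, and let q_m and q_{m−1} be the denominators (in lowest terms) of the finite continued fractions [0; a_1, …, a_m] and [0; a_1, …, a_{m−1}] respectively. For N ≥ 1 let f(N) be the number of positive non-square integers d ≤ N such that the simple continued fraction expansion of √d has i-th partial quotient equal to a_i for every 1 ≤ i ≤ m. Then lim_{N→∞} f(N)/N = 1/(q_m·(q_m + q_{m−1})). -/
/-- `cfTail a m j` is the finite continued fraction `[a_{m-j+1}; a_{m-j+2}, …, a_m]` as a
rational number, so that `cfTail a m m = [a_1; a_2, …, a_m]` (and `cfTail a m 0 = 0`).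
In particular `[0; a_1, …, a_m] = (cfTail a m m)⁻¹`. -/
def cfTail (a : ℕ → ℕ) (m : ℕ) : ℕ → ℚ
  | 0 => 0
  | j + 1 => a (m - j) + (cfTail a m j)⁻¹

open Filter Topology Finset

section Intervals

variable {K : Type*} [Field K] [LinearOrder K] [IsStrictOrderedRing K]

lemma inv_mem_uIoo_iff {z a b : K} (hz : 0 < z) (ha : 0 < a) (hb : 0 < b) :
    z⁻¹ ∈ Set.uIoo a b ↔ z ∈ Set.uIoo a⁻¹ b⁻¹ := by
  simp only [Set.uIoo_eq_union, Set.mem_union, Set.mem_Ioo, inv_lt_comm₀ hz ha, inv_lt_comm₀ hz hb,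
    lt_inv_comm₀ ha hz, lt_inv_comm₀ hb hz]
  tauto

variable [FloorRing K]

lemma mem_Ioo_intCast_add_iff {z u v : K} {c : ℤ} (hu : 0 ≤ u) (hv : v ≤ 1) :
    z ∈ Set.Ioo (c + u) (c + v) ↔ ⌊z⌋ = c ∧ Int.fract z ∈ Set.Ioo u v := by
  constructor
  · rintro ⟨h₁, h₂⟩
    have hfl : ⌊z⌋ = c := Int.floor_eq_iff.2 ⟨by linarith, by linarith⟩
    rw [Int.fract, hfl]
    exact ⟨rfl, by linarith, by linarith⟩
  · rintro ⟨hfl, h₁, h₂⟩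
    rw [Int.fract, hfl] at h₁ h₂
    exact ⟨by linarith, by linarith⟩

lemma mem_uIoo_intCast_add_iff {z u v : K} {c : ℤ} (hu : u ∈ Set.Icc 0 1) (hv : v ∈ Set.Icc 0 1) :
    z ∈ Set.uIoo (c + u) (c + v) ↔ ⌊z⌋ = c ∧ Int.fract z ∈ Set.uIoo u v := by
  simp only [Set.uIoo_eq_union, Set.mem_union, mem_Ioo_intCast_add_iff hu.1 hv.2,
    mem_Ioo_intCast_add_iff hv.1 hu.2, and_or_left]

end Intervals

lemma abs_card_Ioo_floor_ceil_sub_le {a b : ℝ} (ha : 0 ≤ a) (hab : a ≤ b) :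
    |(#(Ioo ⌊a⌋₊ ⌈b⌉₊) : ℝ) - (b - a)| ≤ 1 := by
  have hb : b ≤ ⌈b⌉₊ := Nat.le_ceil b
  have hb' : (⌈b⌉₊ : ℝ) < b + 1 := Nat.ceil_lt_add_one (ha.trans hab)
  have ha' : (⌊a⌋₊ : ℝ) ≤ a := Nat.floor_le ha
  have ha'' : a < ⌊a⌋₊ + 1 := Nat.lt_floor_add_one a
  rw [Nat.card_Ioo, abs_le]
  rcases le_or_gt ⌈b⌉₊ (⌊a⌋₊ + 1) with h | h
  · have h' : (⌈b⌉₊ : ℝ) ≤ ⌊a⌋₊ + 1 := by exact_mod_cast h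
    rw [Nat.sub_sub, Nat.sub_eq_zero_of_le h, Nat.cast_zero]
    constructor <;> linarith
  · rw [Nat.sub_sub, Nat.cast_sub h.le, Nat.cast_add, Nat.cast_one]
    constructor <;> linarith

/-- `cfValue [a₁, …, aₘ] t = [0; a₁, …, aₘ₋₁, aₘ + t]`, and `cfValue [] t = t`. -/
def cfValue {K : Type*} [DivisionRing K] : List ℕ → K → K
  | [], t => t
  | a :: l, t => (a + cfValue l t)⁻¹

/-- `t ↦ cfValue l t` is the Möbius map of this matrix (`cfValue_eq`); for `l = [a₁, …, aₘ]` its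
top row is `(pₘ₋₁, pₘ)` and its bottom row `(qₘ₋₁, qₘ)`. -/
def cfMatrix (l : List ℕ) : Matrix (Fin 2) (Fin 2) ℤ :=
  (l.map fun a : ℕ => !![0, 1; 1, (a : ℤ)]).prod

lemma cfMatrix_cons (a : ℕ) (l : List ℕ) :
    cfMatrix (a :: l) = !![cfMatrix l 1 0, cfMatrix l 1 1;
      cfMatrix l 0 0 + a * cfMatrix l 1 0, cfMatrix l 0 1 + a * cfMatrix l 1 1] := by
  rw [cfMatrix, List.map_cons, List.prod_cons, ← cfMatrix]
  ext i j
  fin_cases i <;> fin_cases j <;> simp [Matrix.mul_apply]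

lemma cfMatrix_append_singleton_one_zero (l : List ℕ) (c : ℕ) :
    cfMatrix (l ++ [c]) 1 0 = cfMatrix l 1 1 := by
  simp [cfMatrix, Matrix.mul_apply]

lemma det_cfMatrix (l : List ℕ) : (cfMatrix l).det = (-1) ^ l.length := by
  induction l with
  | nil => simp [cfMatrix]
  | cons a l ih =>
    rw [cfMatrix, List.map_cons, List.prod_cons, ← cfMatrix, Matrix.det_mul, ih,
      Matrix.det_fin_two_of, List.length_cons, pow_succ]
    ring

lemma cfMatrix_nonneg (l : List ℕ) (i j : Fin 2) : 0 ≤ cfMatrix l i j := by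
  induction l generalizing i j with
  | nil => fin_cases i <;> fin_cases j <;> simp [cfMatrix]
  | cons a l ih =>
    fin_cases i <;> fin_cases j <;> simp only [cfMatrix_cons] <;>
      first | exact ih _ _ | exact add_nonneg (ih _ _) (mul_nonneg a.cast_nonneg (ih _ _))

lemma one_le_cfMatrix_one_one {l : List ℕ} (hl : ∀ a ∈ l, 0 < a) : 1 ≤ cfMatrix l 1 1 := by
  induction l with
  | nil => simp [cfMatrix]
  | cons a l ih =>
    have ha : (1 : ℤ) ≤ a := by exact_mod_cast hl a List.mem_cons_self
    have hq := ih fun b hb => hl b (List.mem_cons_of_mem a hb)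
    have hp := cfMatrix_nonneg l 0 1
    simp only [cfMatrix_cons, Matrix.of_apply, Matrix.cons_val', Matrix.cons_val_one,
      Matrix.cons_val_fin_one]
    nlinarith

section OrderedField

variable {K : Type*} [Field K] [LinearOrder K] [IsStrictOrderedRing K]

lemma cfValue_mem_Icc {l : List ℕ} (hl : ∀ a ∈ l, 0 < a) {t : K} (ht : t ∈ Set.Icc 0 1) :
    cfValue l t ∈ Set.Icc 0 1 := by
  induction l with
  | nil => exact ht
  | cons a l ih =>
    have ha : (1 : K) ≤ a := by exact_mod_cast hl a List.mem_cons_self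
    obtain ⟨h0, -⟩ := ih fun b hb => hl b (List.mem_cons_of_mem a hb)
    exact ⟨inv_nonneg.2 (by linarith), inv_le_one_of_one_le₀ (by linarith)⟩

lemma cfValue_eq {l : List ℕ} (hl : ∀ a ∈ l, 0 < a) {t : K} (ht : 0 ≤ t) :
    cfValue l t =
      (cfMatrix l 0 0 * t + cfMatrix l 0 1) / (cfMatrix l 1 0 * t + cfMatrix l 1 1) := by
  induction l with
  | nil => simp [cfValue, cfMatrix]
  | cons a l ih =>
    have hq : (1 : K) ≤ cfMatrix l 1 1 := by
      exact_mod_cast one_le_cfMatrix_one_one fun b hb => hl b (List.mem_cons_of_mem a hb)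
    have hq' : (0 : K) ≤ cfMatrix l 1 0 := by exact_mod_cast cfMatrix_nonneg l 1 0
    have hD : (cfMatrix l 1 0 * t + cfMatrix l 1 1 : K) ≠ 0 := by positivity
    rw [cfValue, ih fun b hb => hl b (List.mem_cons_of_mem a hb), add_div' _ _ _ hD, inv_div,
      cfMatrix_cons]
    simp only [Matrix.of_apply, Matrix.cons_val', Matrix.cons_val_zero, Matrix.cons_val_one,
      Matrix.empty_val', Matrix.cons_val_fin_one]
    push_cast
    congr 1
    ring

end OrderedField

lemma cfMatrix_determinant (l : List ℕ) :
    cfMatrix l 0 0 * cfMatrix l 1 1 - cfMatrix l 0 1 * cfMatrix l 1 0 = (-1) ^ l.length := by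
  rw [← det_cfMatrix, Matrix.det_fin_two]

theorem abs_cfValue_one_sub_cfValue_zero {l : List ℕ} (hl : ∀ a ∈ l, 0 < a) :
    |cfValue l (1 : ℝ) - cfValue l 0| =
      1 / ((cfMatrix l 1 1 : ℝ) * (cfMatrix l 1 1 + cfMatrix l 1 0)) := by
  have hq : (1 : ℝ) ≤ cfMatrix l 1 1 := by exact_mod_cast one_le_cfMatrix_one_one hl
  have hq' : (0 : ℝ) ≤ cfMatrix l 1 0 := by exact_mod_cast cfMatrix_nonneg l 1 0
  have hdet : (cfMatrix l 0 0 * cfMatrix l 1 1 - cfMatrix l 0 1 * cfMatrix l 1 0 : ℝ) =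
      (-1) ^ l.length := by exact_mod_cast cfMatrix_determinant l
  rw [cfValue_eq hl zero_le_one, cfValue_eq hl le_rfl]
  simp only [mul_one, mul_zero, zero_add]
  rw [div_sub_div _ _ (by positivity) (by positivity), abs_div,
    show (cfMatrix l 0 0 + cfMatrix l 0 1 : ℝ) * cfMatrix l 1 1 -
      (cfMatrix l 1 0 + cfMatrix l 1 1) * cfMatrix l 0 1 = (-1) ^ l.length by
    linear_combination hdet, abs_neg_one_pow, abs_of_pos (by positivity)]
  ring

theorem den_cfValue_zero {l : List ℕ} (hl : ∀ a ∈ l, 0 < a) :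
    ((cfValue l (0 : ℚ)).den : ℤ) = cfMatrix l 1 1 := by
  have hcop : IsCoprime (cfMatrix l 0 1) (cfMatrix l 1 1) := by
    have hsq : ((-1 : ℤ) ^ l.length) ^ 2 = 1 := by
      rw [← pow_mul, mul_comm, pow_mul, neg_one_sq, one_pow]
    refine ⟨-(cfMatrix l 1 0 * (-1) ^ l.length), cfMatrix l 0 0 * (-1) ^ l.length, ?_⟩
    linear_combination (-1) ^ l.length * cfMatrix_determinant l + hsq
  rw [cfValue_eq hl le_rfl]
  simp only [mul_zero, zero_add]
  exact_mod_cast Rat.den_div_eq_of_coprime (one_le_cfMatrix_one_one hl)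
    (Int.isCoprime_iff_gcd_eq_one.1 hcop)

theorem inv_cfTail (a : ℕ → ℕ) {m j : ℕ} (hj : j ≤ m) :
    (cfTail a m j)⁻¹ = cfValue ((List.range' (m + 1 - j) j).map a) 0 := by
  induction j with
  | zero => simp [cfTail, cfValue]
  | succ j ih =>
    rw [cfTail, ih (by omega), show m + 1 - (j + 1) = m - j by omega, List.range'_succ,
      show m - j + 1 = m + 1 - j by omega, List.map_cons, cfValue]

lemma cfAlpha_succ (θ : ℝ) (n : ℕ) : cfAlpha θ (n + 1) = cfAlpha (Int.fract θ)⁻¹ n := by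
  induction n with
  | zero => simp [cfAlpha]
  | succ n ih => rw [cfAlpha, ih, cfAlpha]

lemma cfA_succ (θ : ℝ) (n : ℕ) : cfA θ (n + 1) = cfA (Int.fract θ)⁻¹ n := by
  rw [cfA, cfA, cfAlpha_succ]

lemma cfA_fract_succ (θ : ℝ) (n : ℕ) : cfA (Int.fract θ) (n + 1) = cfA θ (n + 1) := by
  rw [cfA_succ, cfA_succ, Int.fract_fract]

lemma Irrational.fract_mem_Ioo {θ : ℝ} (hθ : Irrational θ) : Int.fract θ ∈ Set.Ioo 0 1 :=
  ⟨Int.fract_pos.2 (hθ.ne_int _), Int.fract_lt_one θ⟩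

lemma Irrational.irrational_fract {θ : ℝ} (hθ : Irrational θ) : Irrational (Int.fract θ) :=
  hθ.sub_intCast _

theorem forall_cfA_eq_iff_mem_uIoo {l : List ℕ} (hl : ∀ a ∈ l, 0 < a) {θ : ℝ}
    (hθ : Irrational θ) (hθ₀₁ : θ ∈ Set.Ioo 0 1) :
    (∀ i (hi : i < l.length), cfA θ (i + 1) = l[i]) ↔ θ ∈ Set.uIoo (cfValue l 0) (cfValue l 1) := by
  induction l generalizing θ with
  | nil => simpa [cfValue] using hθ₀₁
  | cons c l ih =>
    have hl' : ∀ a ∈ l, 0 < a := fun a ha => hl a (List.mem_cons_of_mem c ha)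
    have hc : (1 : ℝ) ≤ c := by exact_mod_cast hl c List.mem_cons_self
    have h₀ := cfValue_mem_Icc hl' (Set.left_mem_Icc.2 (zero_le_one' ℝ))
    have h₁ := cfValue_mem_Icc hl' (Set.right_mem_Icc.2 (zero_le_one' ℝ))
    have hfract : Int.fract θ = θ := Int.fract_eq_self.2 ⟨hθ₀₁.1.le, hθ₀₁.2⟩
    have hfirst : cfA θ 1 = ⌊θ⁻¹⌋ := by rw [cfA_succ, hfract]; rfl
    have hstep : ∀ i, cfA θ (i + 1 + 1) = cfA (Int.fract θ⁻¹) (i + 1) := fun i => by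
      rw [cfA_succ, hfract, cfA_fract_succ]
    calc (∀ i (hi : i < (c :: l).length), cfA θ (i + 1) = (c :: l)[i])
        ↔ ⌊θ⁻¹⌋ = c ∧ ∀ i (hi : i < l.length), cfA (Int.fract θ⁻¹) (i + 1) = l[i] := by
          simp only [List.length_cons, Nat.forall_lt_succ_left', List.getElem_cons_zero,
            List.getElem_cons_succ, hfirst, hstep]
      _ ↔ ⌊θ⁻¹⌋ = c ∧ Int.fract θ⁻¹ ∈ Set.uIoo (cfValue l 0) (cfValue l 1) := by
          rw [ih hl' hθ.inv.irrational_fract hθ.inv.fract_mem_Ioo]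
      _ ↔ θ⁻¹ ∈ Set.uIoo (((c : ℤ) : ℝ) + cfValue l 0) (((c : ℤ) : ℝ) + cfValue l 1) :=
          (mem_uIoo_intCast_add_iff h₀ h₁).symm
      _ ↔ θ ∈ Set.uIoo (cfValue (c :: l) 0) (cfValue (c :: l) 1) := by
          rw [Int.cast_natCast, inv_mem_uIoo_iff hθ₀₁.1 (by linarith [h₀.1]) (by linarith [h₁.1])]
          simp [cfValue]

theorem not_isSquare_and_forall_cfA_sqrt_iff {l : List ℕ} (hl : ∀ a ∈ l, 0 < a) (d : ℕ) :
    (¬IsSquare d ∧ ∀ i (hi : i < l.length), cfA √(d : ℝ) (i + 1) = l[i]) ↔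
      Int.fract √(d : ℝ) ∈ Set.uIoo (cfValue l 0) (cfValue l 1) := by
  by_cases hd : IsSquare d
  · obtain ⟨k, rfl⟩ := hd
    have h₀ := cfValue_mem_Icc hl (Set.left_mem_Icc.2 (zero_le_one' ℝ))
    have h₁ := cfValue_mem_Icc hl (Set.right_mem_Icc.2 (zero_le_one' ℝ))
    have hfract : Int.fract √((k * k : ℕ) : ℝ) = 0 := by
      rw [Nat.cast_mul, Real.sqrt_mul_self (Nat.cast_nonneg k), Int.fract_natCast]
    refine iff_of_false (fun h => h.1 ⟨k, rfl⟩) fun h => ?_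
    rw [hfract] at h
    exact h.1.not_ge (le_inf h₀.1 h₁.1)
  · have hirr : Irrational √(d : ℝ) := irrational_sqrt_natCast_iff.2 hd
    simp only [hd, not_false_eq_true, true_and, ← cfA_fract_succ √(d : ℝ)]
    exact forall_cfA_eq_iff_mem_uIoo hl hirr.irrational_fract hirr.fract_mem_Ioo

lemma pos_of_mem_map_range' {a : ℕ → ℕ} {m : ℕ} (ha : ∀ i, 1 ≤ i → i ≤ m → 0 < a i) :
    ∀ c ∈ (List.range' 1 m).map a, 0 < c := by
  simp only [List.mem_map, List.mem_range'_1]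
  rintro _ ⟨i, hi, rfl⟩
  exact ha i hi.1 (by omega)

theorem pos_and_not_isSquare_and_cfA_sqrt_iff {a : ℕ → ℕ} {m : ℕ}
    (ha : ∀ i, 1 ≤ i → i ≤ m → 0 < a i) (d : ℕ) :
    (0 < d ∧ ¬IsSquare d ∧ ∀ i, 1 ≤ i → i ≤ m → cfA √(d : ℝ) i = a i) ↔
      Int.fract √(d : ℝ) ∈
        Set.uIoo (cfValue ((List.range' 1 m).map a) 0) (cfValue ((List.range' 1 m).map a) 1) := by
  have hindex : (∀ i (hi : i < ((List.range' 1 m).map a).length),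
      cfA √(d : ℝ) (i + 1) = ((List.range' 1 m).map a)[i]) ↔
      ∀ i, 1 ≤ i → i ≤ m → cfA √(d : ℝ) i = a i := by
    simp only [List.length_map, List.length_range', List.getElem_map, List.getElem_range',
      Nat.one_mul]
    refine ⟨fun h i hi₁ hi₂ => ?_, fun h i hi => ?_⟩
    · obtain ⟨j, rfl⟩ := Nat.exists_eq_add_of_le' hi₁
      simpa [add_comm] using h j (by omega)
    · simpa [add_comm] using h (i + 1) (by omega) (by omega)
  rw [← hindex, and_iff_right_of_imp fun h => Nat.pos_of_ne_zero fun hd => h.1 (hd ▸ ⟨0, rfl⟩),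
    not_isSquare_and_forall_cfA_sqrt_iff (pos_of_mem_map_range' ha)]

theorem den_inv_cfTail_self {a : ℕ → ℕ} {m : ℕ} (ha : ∀ i, 1 ≤ i → i ≤ m → 0 < a i) :
    (((cfTail a m m)⁻¹).den : ℤ) = cfMatrix ((List.range' 1 m).map a) 1 1 := by
  rw [inv_cfTail a le_rfl, Nat.add_sub_cancel_left]
  exact den_cfValue_zero (pos_of_mem_map_range' ha)

noncomputable def fractSqrtBlock (x y : ℝ) (n : ℕ) : Finset ℕ :=
  Ioo ⌊((n : ℝ) + x) ^ 2⌋₊ ⌈((n : ℝ) + y) ^ 2⌉₊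

noncomputable def fractSqrtCount (x y : ℝ) (N : ℕ) : ℕ :=
  #{d ∈ Iic N | Int.fract √((d : ℕ) : ℝ) ∈ Set.Ioo x y}

section FractSqrt

variable {x y : ℝ}

lemma mem_fractSqrtBlock (hx : 0 ≤ x) (hxy : x ≤ y) (hy : y ≤ 1) {n d : ℕ} :
    d ∈ fractSqrtBlock x y n ↔ Nat.sqrt d = n ∧ Int.fract √(d : ℝ) ∈ Set.Ioo x y := by
  have hnx : 0 ≤ (n : ℝ) + x := by positivity
  rw [fractSqrtBlock, Finset.mem_Ioo, Nat.floor_lt (sq_nonneg _), Nat.lt_ceil,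
    ← Real.lt_sqrt hnx, ← Real.sqrt_lt (Nat.cast_nonneg d) (by linarith),
    ← Int.cast_natCast n, ← Set.mem_Ioo, mem_Ioo_intCast_add_iff hx hy,
    Real.floor_real_sqrt_eq_nat_sqrt, Nat.cast_inj]

lemma card_fractSqrtBlock_sub_le (hx : 0 ≤ x) (hxy : x ≤ y) (hy : y ≤ 1) (n : ℕ) :
    |(#(fractSqrtBlock x y n) : ℝ) - 2 * n * (y - x)| ≤ 2 := by
  have hsq : ((n : ℝ) + x) ^ 2 ≤ ((n : ℝ) + y) ^ 2 := by gcongr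
  have h := abs_le.1 (abs_card_Ioo_floor_ceil_sub_le (sq_nonneg ((n : ℝ) + x)) hsq)
  have hdiff : ((n : ℝ) + y) ^ 2 - ((n : ℝ) + x) ^ 2 = 2 * n * (y - x) + (y ^ 2 - x ^ 2) := by ring
  have hyx : 0 ≤ y ^ 2 - x ^ 2 := by nlinarith
  have hyx' : y ^ 2 - x ^ 2 ≤ 1 := by nlinarith
  rw [fractSqrtBlock, abs_le]
  constructor <;> linarith [h.1, h.2]

lemma fractSqrtCount_eq_ncard (N : ℕ) :
    fractSqrtCount x y N = {d : ℕ | d ≤ N ∧ Int.fract √(d : ℝ) ∈ Set.Ioo x y}.ncard := by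
  rw [fractSqrtCount, ← Set.ncard_coe_finset, coe_filter]
  simp only [mem_Iic]

lemma fractSqrtCount_mono : Monotone (fractSqrtCount x y) := fun _ _ h =>
  card_le_card (filter_subset_filter _ (Iic_subset_Iic.2 h))

lemma fractSqrtCount_sq (hx : 0 ≤ x) (hxy : x ≤ y) (hy : y ≤ 1) (n : ℕ) :
    fractSqrtCount x y (n ^ 2) = ∑ k ∈ range n, #(fractSqrtBlock x y k) := by
  have hdisj : (range n : Set ℕ).PairwiseDisjoint (fractSqrtBlock x y) := by
    intro k _ k' _ hkk'
    refine disjoint_left.2 fun d hk hk' => hkk' ?_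
    rw [← ((mem_fractSqrtBlock hx hxy hy).1 hk).1, ((mem_fractSqrtBlock hx hxy hy).1 hk').1]
  rw [fractSqrtCount, ← card_biUnion hdisj]
  refine congrArg card (ext fun d => ?_)
  simp only [mem_filter, mem_Iic, mem_biUnion, mem_range, mem_fractSqrtBlock hx hxy hy]
  constructor
  · rintro ⟨hd, hfract⟩
    refine ⟨Nat.sqrt d, Nat.sqrt_lt'.2 (lt_of_le_of_ne hd ?_), rfl, hfract⟩
    rintro rfl
    simp [Nat.cast_pow, Real.sqrt_sq (Nat.cast_nonneg n)] at hfract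
    linarith [hfract.1, hfract.2]
  · rintro ⟨k, hk, rfl, hfract⟩
    exact ⟨(Nat.sqrt_lt'.1 hk).le, hfract⟩

lemma abs_fractSqrtCount_sq_sub_le (hx : 0 ≤ x) (hxy : x ≤ y) (hy : y ≤ 1) (n : ℕ) :
    |(fractSqrtCount x y (n ^ 2) : ℝ) - (y - x) * n ^ 2| ≤ 3 * n := by
  rw [fractSqrtCount_sq hx hxy hy, Nat.cast_sum]
  induction n with
  | zero => simp
  | succ n ih =>
    have hblock := card_fractSqrtBlock_sub_le hx hxy hy n
    rw [sum_range_succ, abs_le] at *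
    push_cast
    constructor <;> nlinarith [ih.1, ih.2, hblock.1, hblock.2]

lemma abs_fractSqrtCount_sub_le (hx : 0 ≤ x) (hxy : x ≤ y) (hy : y ≤ 1) (N : ℕ) :
    |(fractSqrtCount x y N : ℝ) - N * (y - x)| ≤ 5 * Nat.sqrt N + 4 := by
  set M := Nat.sqrt N
  have hMN : (M : ℝ) ^ 2 ≤ N := by exact_mod_cast Nat.sqrt_le' N
  have hNM : (N : ℝ) ≤ M ^ 2 + 2 * M := by
    have : N < (M + 1) ^ 2 := Nat.lt_succ_sqrt' N
    have : N ≤ M ^ 2 + 2 * M := by nlinarith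
    exact_mod_cast this
  have hlo := abs_le.1 (abs_fractSqrtCount_sq_sub_le hx hxy hy M)
  have hhi := abs_le.1 (abs_fractSqrtCount_sq_sub_le hx hxy hy (M + 1))
  push_cast at hhi
  have hmono_lo : (fractSqrtCount x y (M ^ 2) : ℝ) ≤ fractSqrtCount x y N := by
    exact_mod_cast fractSqrtCount_mono (Nat.sqrt_le' N)
  have hmono_hi : (fractSqrtCount x y N : ℝ) ≤ fractSqrtCount x y ((M + 1) ^ 2) := by
    exact_mod_cast fractSqrtCount_mono (Nat.lt_succ_sqrt' N).le
  rw [abs_le]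
  constructor <;> nlinarith [mul_le_mul_of_nonneg_left hNM (sub_nonneg.2 hxy),
    mul_le_mul_of_nonneg_left hMN (sub_nonneg.2 hxy)]

theorem tendsto_fractSqrtCount_div (hx : 0 ≤ x) (hxy : x ≤ y) (hy : y ≤ 1) :
    Tendsto (fun N => (fractSqrtCount x y N : ℝ) / N) atTop (𝓝 (y - x)) := by
  have hsqrt : Tendsto Nat.sqrt atTop atTop :=
    tendsto_atTop_atTop.2 fun b => ⟨b ^ 2, fun N hN => Nat.le_sqrt'.2 hN⟩
  have hbound : ∀ᶠ N : ℕ in atTop,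
      |(fractSqrtCount x y N : ℝ) / N - (y - x)| ≤ 9 / Nat.sqrt N := by
    filter_upwards [eventually_ge_atTop 1] with N hN
    have hM : (1 : ℝ) ≤ Nat.sqrt N := by exact_mod_cast Nat.le_sqrt'.2 (by simpa using hN)
    have hMN : (Nat.sqrt N : ℝ) ^ 2 ≤ N := by exact_mod_cast Nat.sqrt_le' N
    have hN : (0 : ℝ) < N := by exact_mod_cast hN
    calc |(fractSqrtCount x y N : ℝ) / N - (y - x)|
        = |(fractSqrtCount x y N : ℝ) - N * (y - x)| / N := by
          rw [div_sub' hN.ne', abs_div, abs_of_pos hN]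
      _ ≤ (5 * Nat.sqrt N + 4) / N := by gcongr; exact abs_fractSqrtCount_sub_le hx hxy hy N
      _ ≤ 9 * Nat.sqrt N / Nat.sqrt N ^ 2 := by gcongr; linarith
      _ = 9 / Nat.sqrt N := by field_simp
  rw [tendsto_iff_norm_sub_tendsto_zero]
  exact squeeze_zero' (.of_forall fun N => norm_nonneg _) hbound
    ((tendsto_const_div_atTop_nhds_zero_nat 9).comp hsqrt)

theorem tendsto_ncard_fract_sqrt_mem_uIoo (hx : x ∈ Set.Icc 0 1) (hy : y ∈ Set.Icc 0 1) :
    Tendsto (fun N : ℕ => ({d : ℕ | d ≤ N ∧ Int.fract √(d : ℝ) ∈ Set.uIoo x y}.ncard : ℝ) / N)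
      atTop (𝓝 |y - x|) := by
  rw [abs_sub_comm, ← max_sub_min_eq_abs']
  refine (tendsto_fractSqrtCount_div (le_inf hx.1 hy.1) inf_le_sup (sup_le hx.2 hy.2)).congr
    fun N => ?_
  rw [fractSqrtCount_eq_ncard]
  rfl

end FractSqrt

/-- for positive integers `a_1, …, a_m`, with `q_m` and `q_{m-1}` the denominators
in lowest terms of `[0; a_1,…,a_m]` and `[0; a_1,…,a_{m-1}]`, the number `f(N)` of positive
non-square `d ≤ N` whose continued fraction of `√d` has `i`-th partial quotient `a_i` for all
`1 ≤ i ≤ m` satisfies `f(N)/N → 1/(q_m (q_m + q_{m-1}))`. -/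
theorem stmt_8 (m : ℕ) (hm : 1 ≤ m) (a : ℕ → ℕ) (ha : ∀ i, 1 ≤ i → i ≤ m → 0 < a i) :
    Filter.Tendsto
      (fun N : ℕ =>
        (({d : ℕ | 0 < d ∧ d ≤ N ∧ ¬ IsSquare d ∧
            ∀ i, 1 ≤ i → i ≤ m → cfA (Real.sqrt d) i = (a i : ℤ)}.ncard : ℝ) / N))
      Filter.atTop
      (nhds (1 / ((((cfTail a m m)⁻¹).den : ℝ) *
        ((((cfTail a m m)⁻¹).den : ℝ) + (((cfTail a (m - 1) (m - 1))⁻¹).den : ℝ))))) := by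
  obtain ⟨n, rfl⟩ : ∃ n, m = n + 1 := ⟨m - 1, by omega⟩
  have hl := pos_of_mem_map_range' ha
  have hq : (((cfTail a (n + 1) (n + 1))⁻¹).den : ℝ) =
      cfMatrix ((List.range' 1 (n + 1)).map a) 1 1 := by
    exact_mod_cast den_inv_cfTail_self ha
  have hq' : (((cfTail a n n)⁻¹).den : ℝ) = cfMatrix ((List.range' 1 (n + 1)).map a) 1 0 := by
    rw [List.range'_concat, List.map_append, List.map_singleton, cfMatrix_append_singleton_one_zero]
    exact_mod_cast den_inv_cfTail_self fun i h₁ h₂ => ha i h₁ (by omega)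
  have hset : ∀ N : ℕ, {d : ℕ | 0 < d ∧ d ≤ N ∧ ¬ IsSquare d ∧
      ∀ i, 1 ≤ i → i ≤ n + 1 → cfA (Real.sqrt d) i = (a i : ℤ)} =
      {d : ℕ | d ≤ N ∧ Int.fract √(d : ℝ) ∈ Set.uIoo (cfValue ((List.range' 1 (n + 1)).map a) 0)
        (cfValue ((List.range' 1 (n + 1)).map a) 1)} := fun N =>
    Set.ext fun d =>
      and_left_comm.trans (and_congr_right' (pos_and_not_isSquare_and_cfA_sqrt_iff ha d))
  rw [Nat.add_sub_cancel, hq, hq', ← abs_cfValue_one_sub_cfValue_zero hl]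
  simp only [hset]
  exact tendsto_ncard_fract_sqrt_mem_uIoo (cfValue_mem_Icc hl (Set.left_mem_Icc.2 zero_le_one))
    (cfValue_mem_Icc hl (Set.right_mem_Icc.2 zero_le_one))
end

section
/- Let p and q be coprime positive integers with q ≥ 2 and p/q ≥ 4, and write a_0 = ⌊p/q⌋ and k = p − a_0·q (so 1 ≤ k < q). The open interval ( p²/q² , (p/q + 3/(4·a_0·q²))² ) contains an integer if and only if k² ≡ −1 (mod q) and 2a_0 ≡ k·(1 + k²)/q (mod q). In that case it contains exactly one integer, namely d = (p² + 1)/q², and this d satisfies p² − q²·d = −1. -/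
set_option maxHeartbeats 1000000


/-- for coprime positive integers `p, q` with `q ≥ 2`, `p/q ≥ 4`,
`a_0 = ⌊p/q⌋`, `k = p - a_0 q`, the open interval `(p²/q², (p/q + 3/(4 a_0 q²))²)` contains an
integer iff `k² ≡ -1 (mod q)` and `2a_0 ≡ k (1+k²)/q (mod q)`; in that case it contains exactly
one integer, `d = (p²+1)/q²`, which satisfies `p² - q² d = -1`. -/
theorem stmt_10 (p q : ℕ) (hq : 2 ≤ q) (hcop : Nat.Coprime p q) (hpq : 4 * q ≤ p)
    (a0 k : ℕ) (ha0 : a0 = p / q) (hk : k = p - a0 * q) :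
    ((∃ d : ℤ, ((p : ℝ) / q) ^ 2 < (d : ℝ) ∧
        (d : ℝ) < ((p : ℝ) / q + 3 / (4 * (a0 : ℝ) * (q : ℝ) ^ 2)) ^ 2) ↔
      (Int.ModEq (q : ℤ) ((k : ℤ) ^ 2) (-1) ∧
        Int.ModEq (q : ℤ) (2 * (a0 : ℤ)) ((k : ℤ) * ((1 + (k : ℤ) ^ 2) / (q : ℤ))))) ∧
    ∀ d : ℤ, ((p : ℝ) / q) ^ 2 < (d : ℝ) →
      (d : ℝ) < ((p : ℝ) / q + 3 / (4 * (a0 : ℝ) * (q : ℝ) ^ 2)) ^ 2 →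
      (p : ℤ) ^ 2 - (q : ℤ) ^ 2 * d = -1 := by
  have hq0 : 0 < q := by omega
  have hk_mod : k = p % q := by
    rw [hk, ha0, Nat.mod_def, Nat.mul_comm]
  have hp_eq : p = a0 * q + k := by
    rw [hk_mod, ha0, Nat.mul_comm]
    exact (Nat.div_add_mod p q).symm
  have hkq : k < q := hk_mod ▸ Nat.mod_lt p hq0
  have hk1 : 1 ≤ k := by
    rcases Nat.eq_zero_or_pos k with h0 | h; swap; exact h
    exfalso
    have hdvd : q ∣ p := ⟨a0, by rw [Nat.mul_comm]; omega⟩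
    have := hcop.symm.eq_one_of_dvd hdvd
    omega
  have ha4 : 4 ≤ a0 := by
    rw [ha0]; exact (Nat.le_div_iff_mul_le hq0).mpr hpq
  have hpZ : (p : ℤ) = (a0 : ℤ) * q + k := by exact_mod_cast hp_eq
  -- real facts
  have hQ : (2 : ℝ) ≤ (q : ℝ) := by exact_mod_cast hq
  have hA : (4 : ℝ) ≤ (a0 : ℝ) := by exact_mod_cast ha4
  have hQ0 : (0 : ℝ) < (q : ℝ) := by linarith
  have hA0 : (0 : ℝ) < (a0 : ℝ) := by linarith
  have hq2 : (0 : ℝ) < (q : ℝ) ^ 2 := by positivity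
  have hXl : (a0 : ℝ) * (q : ℝ) ≤ (p : ℝ) := by
    have : a0 * q ≤ p := by omega
    exact_mod_cast this
  have hXu : (p : ℝ) < (a0 : ℝ) * (q : ℝ) + (q : ℝ) := by
    have : p < a0 * q + q := by omega
    exact_mod_cast this
  have expand : ((p : ℝ) / q + 3 / (4 * (a0 : ℝ) * (q : ℝ) ^ 2)) ^ 2
      = ((p : ℝ) ^ 2 + (3 * (p : ℝ)) / (2 * a0 * q) + 9 / (16 * (a0 : ℝ) ^ 2 * q ^ 2)) / q ^ 2 := by
    field_simp
    ring
  have key : ∀ d : ℤ, (((p : ℝ) / q) ^ 2 < (d : ℝ) ∧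
      (d : ℝ) < ((p : ℝ) / q + 3 / (4 * (a0 : ℝ) * (q : ℝ) ^ 2)) ^ 2) ↔
      (q : ℤ) ^ 2 * d = (p : ℤ) ^ 2 + 1 := by
    intro d
    constructor
    · rintro ⟨h1, h2⟩
      have e1 : (p : ℝ) ^ 2 < (d : ℝ) * (q : ℝ) ^ 2 := by
        rw [div_pow, div_lt_iff₀ hq2] at h1
        linarith
      have e1' : (p : ℤ) ^ 2 < d * q ^ 2 := by exact_mod_cast e1
      rw [expand, lt_div_iff₀ hq2] at h2
      have b1 : (3 * (p : ℝ)) / (2 * a0 * q) < 15 / 8 := by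
        rw [div_lt_iff₀ (by positivity)]
        nlinarith [mul_nonneg (by linarith : (0:ℝ) ≤ (a0:ℝ) - 4) (by linarith : (0:ℝ) ≤ (q:ℝ))]
      have b2 : (9 : ℝ) / (16 * (a0 : ℝ) ^ 2 * q ^ 2) ≤ 1 / 8 := by
        rw [div_le_iff₀ (by positivity)]
        nlinarith [mul_pos hA0 hQ0, mul_le_mul hA hQ (by norm_num) (by linarith)]
      have e2 : (d : ℝ) * (q : ℝ) ^ 2 < (p : ℝ) ^ 2 + 2 := by linarith
      have e2' : d * q ^ 2 < (p : ℤ) ^ 2 + 2 := by exact_mod_cast e2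
      have h3 : d * (q : ℤ) ^ 2 = (p : ℤ) ^ 2 + 1 := by omega
      linear_combination h3
    · intro hd
      have hdR : (d : ℝ) * ((q : ℝ)) ^ 2 = (p : ℝ) ^ 2 + 1 := by
        rw [mul_comm]; exact_mod_cast hd
      constructor
      · rw [div_pow, div_lt_iff₀ hq2]
        linarith
      · rw [expand, lt_div_iff₀ hq2]
        have b3 : (1 : ℝ) < (3 * (p : ℝ)) / (2 * a0 * q) := by
          rw [lt_div_iff₀ (by positivity)]
          nlinarith [mul_pos hA0 hQ0]
        have b4 : (0 : ℝ) < 9 / (16 * (a0 : ℝ) ^ 2 * q ^ 2) := by positivity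
        linarith
  have iff2 : (∃ d : ℤ, (q : ℤ) ^ 2 * d = (p : ℤ) ^ 2 + 1) ↔
      (Int.ModEq (q : ℤ) ((k : ℤ) ^ 2) (-1) ∧
        Int.ModEq (q : ℤ) (2 * (a0 : ℤ)) ((k : ℤ) * ((1 + (k : ℤ) ^ 2) / (q : ℤ)))) := by
    have hqZ0 : (q : ℤ) ≠ 0 := by positivity
    constructor
    · rintro ⟨d, hd⟩
      have hdvd1 : (q : ℤ) ∣ 1 + (k : ℤ) ^ 2 := by
        refine ⟨q * d - (a0 : ℤ) ^ 2 * q - 2 * a0 * k, ?_⟩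
        linear_combination -hd - ((p : ℤ) + a0 * q + k) * hpZ
      have hM : (q : ℤ) * ((1 + (k : ℤ) ^ 2) / (q : ℤ)) = 1 + (k : ℤ) ^ 2 :=
        Int.mul_ediv_cancel' hdvd1
      set M : ℤ := (1 + (k : ℤ) ^ 2) / (q : ℤ) with hMdef
      have hc1 : Int.ModEq (q : ℤ) ((k : ℤ) ^ 2) (-1) := by
        refine Int.modEq_iff_dvd.mpr ?_
        rw [show (-1 : ℤ) - (k : ℤ) ^ 2 = -(1 + (k : ℤ) ^ 2) by ring]
        exact dvd_neg.mpr hdvd1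
      have hX : (q : ℤ) * (q * d) = q * ((a0 : ℤ) ^ 2 * q + 2 * a0 * k + M) := by
        linear_combination hd - hM + ((p : ℤ) + a0 * q + k) * hpZ
      have hX' : (q : ℤ) * d = (a0 : ℤ) ^ 2 * q + 2 * a0 * k + M :=
        mul_left_cancel₀ hqZ0 hX
      have hdvd3 : (q : ℤ) ∣ 2 * (a0 : ℤ) * k + M := by
        have h : 2 * (a0 : ℤ) * k + M = q * d - q * a0 ^ 2 := by linarith [hX']
        rw [h]
        exact dvd_sub (dvd_mul_right _ _) (dvd_mul_right _ _)
      refine ⟨hc1, Int.modEq_iff_dvd.mpr ?_⟩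
      rw [show (k : ℤ) * M - 2 * a0 = k * (2 * (a0 : ℤ) * k + M) - 2 * a0 * (1 + (k : ℤ) ^ 2) by ring]
      exact dvd_sub (hdvd3.mul_left _) (hdvd1.mul_left _)
    · rintro ⟨hc1, hc2⟩
      have hdvd1 : (q : ℤ) ∣ 1 + (k : ℤ) ^ 2 := by
        have h := Int.ModEq.dvd hc1
        rw [show (1 : ℤ) + (k : ℤ) ^ 2 = -(-1 - (k : ℤ) ^ 2) by ring]
        exact dvd_neg.mpr h
      have hM : (q : ℤ) * ((1 + (k : ℤ) ^ 2) / (q : ℤ)) = 1 + (k : ℤ) ^ 2 :=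
        Int.mul_ediv_cancel' hdvd1
      set M : ℤ := (1 + (k : ℤ) ^ 2) / (q : ℤ) with hMdef
      have hdvd3 : (q : ℤ) ∣ 2 * (a0 : ℤ) * k + M := by
        have h := Int.ModEq.dvd hc2
        rw [show 2 * (a0 : ℤ) * k + M = (1 + (k : ℤ) ^ 2) * M - k * (k * M - 2 * a0) by ring]
        exact dvd_sub (hdvd1.mul_right _) (h.mul_left _)
      obtain ⟨e, he⟩ := hdvd3
      refine ⟨(a0 : ℤ) ^ 2 + e, ?_⟩
      linear_combination (-(p : ℤ) - a0 * q - k) * hpZ + hM - (q : ℤ) * he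
  constructor
  · rw [exists_congr key]
    exact iff2
  · intro d h1 h2
    have := (key d).mp ⟨h1, h2⟩
    linarith
end

section
/- Let p and q be coprime positive integers with q ≥ 2 and p/q ≥ 4, and write a_0 = ⌊p/q⌋ and k = p − a_0·q (so 1 ≤ k < q). The open interval ( (p/q − 3/(4·a_0·q²))² , p²/q² ) contains an integer if and only if k² ≡ 1 (mod q) and 2a_0 ≡ k·(1 − k²)/q (mod q). In that case it contains exactly one integer, namely d = (p² − 1)/q², and this d satisfies p² − q²·d = 1. -/
/-!
Multiplying by `q²`, the interval becomes `((p - δ)², p²)` with `δ = 3 / (4 a₀ q)`. Since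
`a₀ q ≤ p < (a₀ + 1) q` and `a₀ ≥ 4`, we have `3/2 ≤ 2pδ < 15/8` and `δ² ≤ 9/256`, so `(p - δ)²`
lies strictly between `p² - 2` and `p² - 1`. Hence the only integer `d` the interval can contain is
the one with `q² d = p² - 1`, and it exists iff `q² ∣ (a₀ q + k)² - 1`. Expanding, this says
`q ∣ k² - 1` and, writing `k² - 1 = q m`, `q ∣ 2a₀k + m`; as `k` is its own inverse mod `q`, the
latter is `2a₀ ≡ -km = k (1 - k²)/q (mod q)`.
-/

namespace Int

variable {A Q K m : ℤ}

theorem sq_dvd_sq_add_sub_one_iff_of_eq (hQ : Q ≠ 0) (hm : K ^ 2 - 1 = Q * m) :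
    Q ^ 2 ∣ (A * Q + K) ^ 2 - 1 ↔ Q ∣ 2 * A * K + m := by
  rw [show (A * Q + K) ^ 2 - 1 = Q * (Q * A ^ 2 + (2 * A * K + m)) by linear_combination hm,
    sq, mul_dvd_mul_iff_left hQ, dvd_add_right (dvd_mul_right _ _)]

theorem two_mul_modEq_mul_div_iff_dvd (hQ : Q ≠ 0) (hm : K ^ 2 - 1 = Q * m) :
    2 * A ≡ K * ((1 - K ^ 2) / Q) [ZMOD Q] ↔ Q ∣ 2 * A * K + m := by
  rw [show 1 - K ^ 2 = Q * -m by linear_combination -hm, Int.mul_ediv_cancel_left _ hQ,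
    Int.modEq_iff_dvd]
  constructor
  · rintro ⟨c, hc⟩
    exact ⟨-K * c - m ^ 2, by linear_combination -K * hc - m * hm⟩
  · rintro ⟨c, hc⟩
    exact ⟨-K * c + 2 * A * m, by linear_combination -K * hc + 2 * A * hm⟩

theorem sq_dvd_sq_add_sub_one_iff (hQ : Q ≠ 0) :
    Q ^ 2 ∣ (A * Q + K) ^ 2 - 1 ↔
      K ^ 2 ≡ 1 [ZMOD Q] ∧ 2 * A ≡ K * ((1 - K ^ 2) / Q) [ZMOD Q] := by
  constructor
  · intro h
    obtain ⟨m, hm⟩ : Q ∣ K ^ 2 - 1 := by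
      have h' : Q ∣ (A * Q + K) ^ 2 - 1 := (dvd_pow_self Q two_ne_zero).trans h
      rwa [show (A * Q + K) ^ 2 - 1 = Q * (A ^ 2 * Q + 2 * A * K) + (K ^ 2 - 1) by ring,
        dvd_add_right (dvd_mul_right _ _)] at h'
    exact ⟨(Int.modEq_iff_dvd.2 ⟨m, hm⟩).symm,
      (two_mul_modEq_mul_div_iff_dvd hQ hm).2 ((sq_dvd_sq_add_sub_one_iff_of_eq hQ hm).1 h)⟩
  · rintro ⟨hK, hA⟩
    obtain ⟨m, hm⟩ := Int.modEq_iff_dvd.1 hK.symm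
    exact (sq_dvd_sq_add_sub_one_iff_of_eq hQ hm).2 ((two_mul_modEq_mul_div_iff_dvd hQ hm).1 hA)

end Int

theorem sq_sub_three_div_mem_Ioo {a p q : ℝ} (ha : 4 ≤ a) (hq : 1 ≤ q)
    (hlo : a * q ≤ p) (hhi : p < (a + 1) * q) :
    (p - 3 / (4 * a * q)) ^ 2 ∈ Set.Ioo (p ^ 2 - 2) (p ^ 2 - 1) := by
  set δ := 3 / (4 * a * q)
  have haq : 4 ≤ a * q := by nlinarith
  have hδ : δ * (4 * a * q) = 3 := div_mul_cancel₀ _ (by positivity)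
  have hδ_pos : 0 < δ := by positivity
  have hδ_le : δ ≤ 3 / 16 := by nlinarith
  constructor <;> nlinarith

theorem intCast_mem_Ioo_iff_sq_sub_sq_mul_eq_one {P Q d : ℤ} {r : ℝ} (hQ : Q ≠ 0)
    (hr : r * Q ^ 2 ∈ Set.Ioo ((P : ℝ) ^ 2 - 2) ((P : ℝ) ^ 2 - 1)) :
    (d : ℝ) ∈ Set.Ioo r (((P : ℝ) / Q) ^ 2) ↔ P ^ 2 - Q ^ 2 * d = 1 := by
  obtain ⟨hlo, hhi⟩ := hr
  have hQ2 : (0 : ℝ) < (Q : ℝ) ^ 2 := by positivity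
  rw [Set.mem_Ioo, div_pow, lt_div_iff₀ hQ2, ← mul_lt_mul_iff_left₀ hQ2]
  constructor
  · rintro ⟨h1, h2⟩
    have hlo' : P ^ 2 - 2 < Q ^ 2 * d := by
      exact_mod_cast (by linarith : (P : ℝ) ^ 2 - 2 < Q ^ 2 * d)
    have hhi' : d * Q ^ 2 < P ^ 2 := by exact_mod_cast h2
    nlinarith
  · intro h
    have hR : (d : ℝ) * Q ^ 2 = P ^ 2 - 1 := by
      exact_mod_cast (by linarith : d * Q ^ 2 = P ^ 2 - 1)
    constructor <;> linarith

theorem stmt_11_general (p q : ℕ) (hq : 2 ≤ q) (hpq : 4 * q ≤ p)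
    (a0 k : ℕ) (ha0 : a0 = p / q) (hk : k = p - a0 * q) :
    ((∃ d : ℤ, ((p : ℝ) / q - 3 / (4 * (a0 : ℝ) * (q : ℝ) ^ 2)) ^ 2 < (d : ℝ) ∧
        (d : ℝ) < ((p : ℝ) / q) ^ 2) ↔
      (Int.ModEq (q : ℤ) ((k : ℤ) ^ 2) 1 ∧
        Int.ModEq (q : ℤ) (2 * (a0 : ℤ)) ((k : ℤ) * ((1 - (k : ℤ) ^ 2) / (q : ℤ))))) ∧
    ∀ d : ℤ, ((p : ℝ) / q - 3 / (4 * (a0 : ℝ) * (q : ℝ) ^ 2)) ^ 2 < (d : ℝ) →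
      (d : ℝ) < ((p : ℝ) / q) ^ 2 →
      (p : ℤ) ^ 2 - (q : ℤ) ^ 2 * d = 1 := by
  have hq0 : 0 < q := by omega
  have ha0_le : a0 * q ≤ p := ha0 ▸ Nat.div_mul_le_self p q
  have hp_lt : p < (a0 + 1) * q := by rw [ha0, add_mul, one_mul]; exact Nat.lt_div_mul_add hq0
  have ha0_ge : 4 ≤ a0 := ha0 ▸ (Nat.le_div_iff_mul_le hq0).2 hpq
  have hp : (p : ℤ) = a0 * q + k := by omega
  have hmid := sq_sub_three_div_mem_Ioo (a := a0) (p := p) (q := q)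
    (by exact_mod_cast ha0_ge) (by exact_mod_cast hq0) (by exact_mod_cast ha0_le)
    (by exact_mod_cast hp_lt)
  have hscale : ((p : ℝ) / q - 3 / (4 * a0 * q ^ 2)) ^ 2 * q ^ 2 = (p - 3 / (4 * a0 * q)) ^ 2 := by
    field_simp
  have hmem := fun d : ℤ ↦ intCast_mem_Ioo_iff_sq_sub_sq_mul_eq_one (P := p) (Q := q) (d := d)
    (r := ((p : ℝ) / q - 3 / (4 * a0 * q ^ 2)) ^ 2) (by positivity) (by push_cast; rwa [hscale])
  push_cast at hmem
  refine ⟨?_, fun d h1 h2 ↦ (hmem d).1 ⟨h1, h2⟩⟩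
  rw [← Int.sq_dvd_sq_add_sub_one_iff (by positivity), ← hp]
  exact (exists_congr hmem).trans
    ⟨fun ⟨d, hd⟩ ↦ ⟨d, by linarith⟩, fun ⟨d, hd⟩ ↦ ⟨d, by linarith⟩⟩

/-- for coprime positive integers `p, q` with `q ≥ 2`, `p/q ≥ 4`,
`a_0 = ⌊p/q⌋`, `k = p - a_0 q`, the open interval `((p/q - 3/(4 a_0 q²))², p²/q²)` contains an
integer iff `k² ≡ 1 (mod q)` and `2a_0 ≡ k (1-k²)/q (mod q)`; in that case it contains exactly
one integer, `d = (p²-1)/q²`, which satisfies `p² - q² d = 1`. -/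
theorem stmt_11 (p q : ℕ) (hq : 2 ≤ q) (hcop : Nat.Coprime p q) (hpq : 4 * q ≤ p)
    (a0 k : ℕ) (ha0 : a0 = p / q) (hk : k = p - a0 * q) :
    ((∃ d : ℤ, ((p : ℝ) / q - 3 / (4 * (a0 : ℝ) * (q : ℝ) ^ 2)) ^ 2 < (d : ℝ) ∧
        (d : ℝ) < ((p : ℝ) / q) ^ 2) ↔
      (Int.ModEq (q : ℤ) ((k : ℤ) ^ 2) 1 ∧
        Int.ModEq (q : ℤ) (2 * (a0 : ℤ)) ((k : ℤ) * ((1 - (k : ℤ) ^ 2) / (q : ℤ))))) ∧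
    ∀ d : ℤ, ((p : ℝ) / q - 3 / (4 * (a0 : ℝ) * (q : ℝ) ^ 2)) ^ 2 < (d : ℝ) →
      (d : ℝ) < ((p : ℝ) / q) ^ 2 →
      (p : ℤ) ^ 2 - (q : ℤ) ^ 2 * d = 1 :=
  stmt_11_general p q hq hpq a0 k ha0 hk
end

section
/- Let p and q be coprime positive integers with q ≥ 2 and p/q ≥ 4, and write a_0 = ⌊p/q⌋ and k = p − a_0·q (so 1 ≤ k < q). The open interval ( (2p/q − 1)² , (2p/q − 1 + 3/(2·a_0·q²))² ) contains an integer congruent to 1 modulo 4 if and only if k² ≡ −1 (mod q) and 2a_0 ≡ 1 + k·(1 + k²)/q (mod q). In that case it contains exactly one such integer, namely d = 4·(p² − p·q + 1)/q² + 1, and this d satisfies (2p − q)² − q²·d = −4, i.e. the field norm N(p − q·(1+√d)/2) = −1. -/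
/-!
Put x = 2p − q. Clearing denominators, d lies in the interval iff x² < q²d and
4a₀²q⁴d < (2a₀qx + 3)². As a₀q ≤ p < (a₀ + 1)q and a₀ ≥ 2, this forces
0 < q²d − x² < 8, while for d ≡ 1 (mod 4) the difference q²d − x² = q²(d − 1) − 4(p² − pq)
is divisible by 4; hence q²d = x² + 4. Since x² + 4 = q² + 4(p² − pq + 1), such a d exists
iff q² ∣ p² − pq + 1. With p = a₀q + k this number is (1 + k²) + qk(2a₀ − 1) modulo q²;
writing 1 + k² = qt, divisibility by q² means q ∣ t + k(2a₀ − 1), which after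
multiplication by the unit k modulo q becomes 2a₀ ≡ 1 + kt (mod q).
-/

theorem div_sub_one_sq_lt_and_lt_iff {K : Type*} [Field K] [LinearOrder K]
    [IsStrictOrderedRing K] {a q x d : K} (ha : a ≠ 0) (hq : q ≠ 0) :
    ((x / q - 1) ^ 2 < d ∧ d < (x / q - 1 + 3 / (2 * a * q ^ 2)) ^ 2) ↔
      ((x - q) ^ 2 < q ^ 2 * d ∧ 4 * a ^ 2 * q ^ 4 * d < (2 * a * q * (x - q) + 3) ^ 2) := by
  have hlow : x / q - 1 = (x - q) / q := by field_simp
  have hup : x / q - 1 + 3 / (2 * a * q ^ 2) = (2 * a * q * (x - q) + 3) / (2 * a * q ^ 2) := by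
    field_simp
  rw [hup, hlow, div_pow, div_pow, div_lt_iff₀ (by positivity), lt_div_iff₀ (by positivity)]
  constructor <;> rintro ⟨h₁, h₂⟩ <;> constructor <;> linarith

theorem sq_mul_eq_sq_add_four_of_lt_of_lt {a p q d : ℤ} (ha : 2 ≤ a) (hq : 0 < q)
    (hp : p < (a + 1) * q) (hd : d % 4 = 1) (hlow : (2 * p - q) ^ 2 < q ^ 2 * d)
    (hup : 4 * a ^ 2 * q ^ 4 * d < (2 * a * q * (2 * p - q) + 3) ^ 2) :
    q ^ 2 * d = (2 * p - q) ^ 2 + 4 := by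
  obtain ⟨e, he⟩ : (4 : ℤ) ∣ d - 1 := by omega
  set m := q ^ 2 * d - (2 * p - q) ^ 2 with hm
  have hm4 : m = 4 * (q ^ 2 * e + p * q - p ^ 2) := by rw [hm]; linear_combination q ^ 2 * he
  have hmq : 4 * a ^ 2 * q ^ 2 * m < 12 * a * q * (2 * p - q) + 9 := by nlinarith
  have hm8 : m < 8 := by
    by_contra! h
    have haq : 0 ≤ a * q * ((2 * a * q + q - 2) - (2 * p - q)) :=
      mul_nonneg (by positivity) (by linarith)
    nlinarith [mul_nonneg (sub_nonneg.2 h) (sq_nonneg (a * q)),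
      mul_pos (by positivity : 0 < a) hq]
  omega

theorem lt_sq_of_sq_mul_eq_sq_add_four {a p q d : ℤ} (ha : 2 ≤ a) (hq : 0 < q)
    (hp : a * q ≤ p) (h : q ^ 2 * d = (2 * p - q) ^ 2 + 4) :
    4 * a ^ 2 * q ^ 4 * d < (2 * a * q * (2 * p - q) + 3) ^ 2 := by
  have haq : 0 ≤ a * q * ((2 * p - q) - (2 * a * q - q)) :=
    mul_nonneg (by positivity) (by linarith)
  nlinarith [mul_nonneg (sub_nonneg.2 ha) (mul_nonneg (by positivity : (0 : ℤ) ≤ a) (sq_nonneg q))]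

theorem lt_and_lt_iff_sq_mul_eq_sq_add_four {a p q d : ℤ} (ha : 2 ≤ a) (hq : 0 < q)
    (hlo : a * q ≤ p) (hhi : p < (a + 1) * q) (hd : d % 4 = 1) :
    ((2 * p - q) ^ 2 < q ^ 2 * d ∧ 4 * a ^ 2 * q ^ 4 * d < (2 * a * q * (2 * p - q) + 3) ^ 2) ↔
      q ^ 2 * d = (2 * p - q) ^ 2 + 4 :=
  ⟨fun ⟨hlow, hup⟩ => sq_mul_eq_sq_add_four_of_lt_of_lt ha hq hhi hd hlow hup,
    fun h => ⟨by linarith, lt_sq_of_sq_mul_eq_sq_add_four ha hq hlo h⟩⟩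

theorem exists_emod_four_eq_one_and_sq_mul_eq_iff {p q : ℤ} :
    (∃ d, d % 4 = 1 ∧ q ^ 2 * d = (2 * p - q) ^ 2 + 4) ↔ q ^ 2 ∣ p ^ 2 - p * q + 1 := by
  constructor
  · rintro ⟨d, hd, h⟩
    obtain ⟨e, he⟩ : (4 : ℤ) ∣ d - 1 := by omega
    exact ⟨e, mul_left_cancel₀ four_ne_zero (by linear_combination q ^ 2 * he - h)⟩
  · rintro ⟨c, hc⟩
    exact ⟨4 * c + 1, by omega, by linear_combination -4 * hc⟩

theorem sq_dvd_iff_modEq {a k q : ℤ} (hq : q ≠ 0) (hkq : IsCoprime k q) :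
    q ^ 2 ∣ (a * q + k) ^ 2 - (a * q + k) * q + 1 ↔
      k ^ 2 ≡ -1 [ZMOD q] ∧ 2 * a ≡ 1 + k * ((1 + k ^ 2) / q) [ZMOD q] := by
  have hsq : k ^ 2 ≡ -1 [ZMOD q] ↔ q ∣ 1 + k ^ 2 := by
    rw [Int.modEq_iff_dvd, ← dvd_neg, neg_sub, sub_neg_eq_add, add_comm]
  have hexp : (a * q + k) ^ 2 - (a * q + k) * q + 1
      = (1 + k ^ 2) + q * (k * (2 * a - 1)) + q ^ 2 * (a ^ 2 - a) := by ring
  rw [hexp, dvd_add_left (dvd_mul_right _ _), hsq]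
  have key : q ∣ 1 + k ^ 2 →
      (q ^ 2 ∣ 1 + k ^ 2 + q * (k * (2 * a - 1)) ↔
        2 * a ≡ 1 + k * ((1 + k ^ 2) / q) [ZMOD q]) := by
    rintro ⟨t, ht⟩
    have hunit : q ∣ t + k * (2 * a - 1) ↔ q ∣ k * (t + k * (2 * a - 1)) :=
      ⟨(·.mul_left k), hkq.symm.dvd_of_dvd_mul_left⟩
    have hmul : k * (t + k * (2 * a - 1)) = (1 + k * t - 2 * a) + q * (t * (2 * a - 1)) := by
      linear_combination (2 * a - 1) * ht
    rw [ht, Int.mul_ediv_cancel_left _ hq, Int.modEq_iff_dvd, sq, ← mul_add,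
      mul_dvd_mul_iff_left hq, hunit, hmul, dvd_add_left (dvd_mul_right _ _)]
  refine ⟨fun h => ?_, fun ⟨hdvd, hcong⟩ => (key hdvd).2 hcong⟩
  have hdvd : q ∣ 1 + k ^ 2 :=
    (dvd_add_left (dvd_mul_right _ _)).1 ((dvd_pow_self q two_ne_zero).trans h)
  exact ⟨hdvd, (key hdvd).1 h⟩

/-- for coprime positive integers `p, q` with `q ≥ 2`, `p/q ≥ 4`,
`a_0 = ⌊p/q⌋`, `k = p - a_0 q`, the open interval `((2p/q - 1)², (2p/q - 1 + 3/(2 a_0 q²))²)`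
contains an integer `≡ 1 (mod 4)` iff `k² ≡ -1 (mod q)` and `2a_0 ≡ 1 + k (1+k²)/q (mod q)`;
in that case it contains exactly one such integer, `d = 4(p² - pq + 1)/q² + 1`, which
satisfies `(2p - q)² - q² d = -4`, i.e. `N(p - q (1+√d)/2) = -1`. -/
theorem stmt_12 (p q : ℕ) (hq : 2 ≤ q) (hcop : Nat.Coprime p q) (hpq : 4 * q ≤ p)
    (a0 k : ℕ) (ha0 : a0 = p / q) (hk : k = p - a0 * q) :
    ((∃ d : ℤ, d % 4 = 1 ∧ (2 * (p : ℝ) / q - 1) ^ 2 < (d : ℝ) ∧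
        (d : ℝ) < (2 * (p : ℝ) / q - 1 + 3 / (2 * (a0 : ℝ) * (q : ℝ) ^ 2)) ^ 2) ↔
      (Int.ModEq (q : ℤ) ((k : ℤ) ^ 2) (-1) ∧
        Int.ModEq (q : ℤ) (2 * (a0 : ℤ)) (1 + (k : ℤ) * ((1 + (k : ℤ) ^ 2) / (q : ℤ))))) ∧
    ∀ d : ℤ, d % 4 = 1 → (2 * (p : ℝ) / q - 1) ^ 2 < (d : ℝ) →
      (d : ℝ) < (2 * (p : ℝ) / q - 1 + 3 / (2 * (a0 : ℝ) * (q : ℝ) ^ 2)) ^ 2 →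
      (2 * (p : ℤ) - (q : ℤ)) ^ 2 - (q : ℤ) ^ 2 * d = -4 := by
  have hdivmod := Nat.div_add_mod' p q
  have hmod := Nat.mod_lt p (by omega : 0 < q)
  rw [← ha0] at hdivmod
  have ha : 4 ≤ a0 := ha0 ▸ (Nat.le_div_iff_mul_le (by omega)).2 hpq
  have hpk : (p : ℤ) = a0 * q + k := by omega
  have hlo : (a0 : ℤ) * q ≤ p := by omega
  have hhi : (p : ℤ) < (a0 + 1) * q := by
    have hk_lt : (k : ℤ) < q := by omega
    linarith
  have hkq : IsCoprime (k : ℤ) q :=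
    .of_add_mul_right_left (by rw [add_comm, ← hpk]; exact Nat.isCoprime_iff_coprime.2 hcop)
  have hinterval (d : ℤ) (hd : d % 4 = 1) :
      ((2 * (p : ℝ) / q - 1) ^ 2 < d ∧
        d < (2 * (p : ℝ) / q - 1 + 3 / (2 * (a0 : ℝ) * q ^ 2)) ^ 2) ↔
          (q : ℤ) ^ 2 * d = (2 * p - q) ^ 2 + 4 := by
    rw [div_sub_one_sq_lt_and_lt_iff (by positivity) (by positivity),
      ← lt_and_lt_iff_sq_mul_eq_sq_add_four (by omega) (by omega) hlo hhi hd]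
    norm_cast
  refine ⟨?_, fun d hd hlow hup => by linarith [(hinterval d hd).1 ⟨hlow, hup⟩]⟩
  calc _ ↔ ∃ d : ℤ, d % 4 = 1 ∧ (q : ℤ) ^ 2 * d = (2 * p - q) ^ 2 + 4 :=
        exists_congr fun d => and_congr_right (hinterval d)
    _ ↔ (q : ℤ) ^ 2 ∣ (a0 * q + k) ^ 2 - (a0 * q + k) * q + 1 := by
        rw [exists_emod_four_eq_one_and_sq_mul_eq_iff, hpk]
    _ ↔ _ := sq_dvd_iff_modEq (by omega) hkq
end

section
/- Let p and q be coprime positive integers with q ≥ 2 and p/q ≥ 4, and write a_0 = ⌊p/q⌋ and k = p − a_0·q (so 1 ≤ k < q). The open interval ( (2p/q − 1 − 3/(2·a_0·q²))² , (2p/q − 1)² ) contains an integer congruent to 1 modulo 4 if and only if k² ≡ 1 (mod q) and 2a_0 ≡ 1 + k·(1 − k²)/q (mod q). In that case it contains exactly one such integer, namely d = 4·(p² − p·q − 1)/q² + 1, and this d satisfies (2p − q)² − q²·d = 4, i.e. the field norm N(p − q·(1+√d)/2) = 1. -/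
/-! Put `D = 2p - q`. Multiplying the window by `q²` shows that an integer `d` lies in it exactly
when `N = D² - q² d` satisfies `0 < N < 3D/(a₀q) - 9/(4a₀²q²)`, and this bound lies strictly
between `4` and `8`. For `d ≡ 1 (mod 4)` we have `N = 4 (p² - pq - q² (d - 1)/4)`, so the window
contains such a `d` iff `N = 4` is solvable, i.e. iff `q² ∣ p² - pq - 1`. Writing `p = a₀q + k`,
this divisibility splits into `k² ≡ 1` and a linear condition on `a₀` modulo `q`. -/

theorem lt_sq_two_mul_div_sub_one_iff {p q d : ℝ} (hq : 0 < q) :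
    d < (2 * p / q - 1) ^ 2 ↔ 0 < (2 * p - q) ^ 2 - q ^ 2 * d := by
  rw [show 2 * p / q - 1 = (2 * p - q) / q by field_simp, div_pow, lt_div_iff₀ (by positivity),
    sub_pos, mul_comm]

theorem sq_two_mul_div_sub_one_sub_lt_iff {p q a d : ℝ} (hq : 0 < q) (ha : 0 < a) :
    (2 * p / q - 1 - 3 / (2 * a * q ^ 2)) ^ 2 < d ↔
      4 * a ^ 2 * q ^ 2 * ((2 * p - q) ^ 2 - q ^ 2 * d) < 12 * a * q * (2 * p - q) - 9 := by
  rw [show 2 * p / q - 1 - 3 / (2 * a * q ^ 2) = ((2 * p - q) * (2 * a * q) - 3) / (2 * a * q ^ 2)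
    by field_simp, div_pow, div_lt_iff₀ (by positivity)]
  constructor <;> intro h <;> linarith

section Window

variable {A Q P N : ℤ}

theorem eq_four_of_mul_lt_of_four_dvd (hA : 2 ≤ A) (hQ : 0 < Q) (hP : P < (A + 1) * Q)
    (hN : 0 < N) (h4 : 4 ∣ N) (h : 4 * A ^ 2 * Q ^ 2 * N < 12 * A * Q * (2 * P - Q) - 9) :
    N = 4 := by
  have : N < 8 := by
    by_contra! hN8
    nlinarith [mul_le_mul_of_nonneg_left hN8 (by positivity : (0 : ℤ) ≤ 4 * A ^ 2 * Q ^ 2),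
      mul_lt_mul_of_pos_left hP (by positivity : (0 : ℤ) < 24 * A * Q),
      mul_le_mul_of_nonneg_left hA (by positivity : (0 : ℤ) ≤ 12 * A * Q ^ 2)]
  omega

theorem sixteen_mul_sq_mul_sq_lt (hA : 2 ≤ A) (hQ : 2 ≤ Q) (hP : A * Q ≤ P) :
    16 * A ^ 2 * Q ^ 2 < 12 * A * Q * (2 * P - Q) - 9 := by
  nlinarith [mul_le_mul_of_nonneg_left hP (by positivity : (0 : ℤ) ≤ 24 * A * Q),
    mul_le_mul_of_nonneg_left (by linarith : (1 : ℤ) ≤ 2 * A - 3)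
      (by positivity : (0 : ℤ) ≤ 4 * A * Q ^ 2),
    mul_le_mul hA hQ (by norm_num) (by linarith : (0 : ℤ) ≤ A)]

end Window

theorem lt_and_lt_iff_sq_sub_mul_eq_four {p q a : ℕ} (hq : 2 ≤ q) (ha : 2 ≤ a) (hap : a * q ≤ p)
    (hpa : p < (a + 1) * q) (d : ℤ) (hd : d % 4 = 1) :
    ((2 * (p : ℝ) / q - 1 - 3 / (2 * (a : ℝ) * (q : ℝ) ^ 2)) ^ 2 < d ∧
        (d : ℝ) < (2 * (p : ℝ) / q - 1) ^ 2) ↔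
      (2 * (p : ℤ) - q) ^ 2 - (q : ℤ) ^ 2 * d = 4 := by
  rw [sq_two_mul_div_sub_one_sub_lt_iff (by positivity) (by positivity),
    lt_sq_two_mul_div_sub_one_iff (by positivity)]
  obtain ⟨s, rfl⟩ : ∃ s, d = 4 * s + 1 := ⟨d / 4, by omega⟩
  have h4 : (4 : ℤ) ∣ (2 * p - q) ^ 2 - q ^ 2 * (4 * s + 1) := ⟨p ^ 2 - p * q - q ^ 2 * s, by ring⟩
  have hA : (2 : ℤ) ≤ a := by exact_mod_cast ha
  have hQ : (2 : ℤ) ≤ q := by exact_mod_cast hq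
  have hP : (a : ℤ) * q ≤ p := by exact_mod_cast hap
  have hP' : (p : ℤ) < (a + 1) * q := by exact_mod_cast hpa
  constructor
  · rintro ⟨hlow, hup⟩
    exact eq_four_of_mul_lt_of_four_dvd hA (by omega) hP' (by exact_mod_cast hup) h4
      (by exact_mod_cast hlow)
  · intro hN
    have hlow : 4 * (a : ℤ) ^ 2 * q ^ 2 * ((2 * p - q) ^ 2 - q ^ 2 * (4 * s + 1)) <
        12 * a * q * (2 * p - q) - 9 := by
      rw [hN]; linarith [sixteen_mul_sq_mul_sq_lt hA hQ hP]
    exact ⟨by exact_mod_cast hlow, by exact_mod_cast hN ▸ four_pos⟩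

theorem exists_sq_sub_mul_eq_four_iff (P Q : ℤ) :
    (∃ d : ℤ, d % 4 = 1 ∧ (2 * P - Q) ^ 2 - Q ^ 2 * d = 4) ↔ Q ^ 2 ∣ P ^ 2 - P * Q - 1 := by
  constructor
  · rintro ⟨d, hd, hN⟩
    obtain ⟨s, rfl⟩ : ∃ s, d = 4 * s + 1 := ⟨d / 4, by omega⟩
    exact ⟨s, mul_left_cancel₀ four_ne_zero (by linear_combination hN)⟩
  · rintro ⟨s, hs⟩
    exact ⟨4 * s + 1, by omega, by linear_combination 4 * hs⟩

theorem Int.mul_modEq_iff_modEq_mul_of_sq_modEq_one {Q K x y : ℤ} (hK : K ^ 2 ≡ 1 [ZMOD Q]) :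
    K * x ≡ y [ZMOD Q] ↔ x ≡ K * y [ZMOD Q] := by
  have hx : ∀ z, K * (K * z) ≡ z [ZMOD Q] := fun z => by
    simpa [← mul_assoc, ← sq] using hK.mul_right z
  exact ⟨fun h => (hx x).symm.trans (h.mul_left K), fun h => (h.mul_left K).trans (hx y)⟩

theorem sq_dvd_iff_modEq_s13 {A Q K : ℤ} (hQ : Q ≠ 0) :
    Q ^ 2 ∣ (A * Q + K) ^ 2 - (A * Q + K) * Q - 1 ↔
      K ^ 2 ≡ 1 [ZMOD Q] ∧ 2 * A ≡ 1 + K * ((1 - K ^ 2) / Q) [ZMOD Q] := by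
  have hK : Q ^ 2 ∣ (A * Q + K) ^ 2 - (A * Q + K) * Q - 1 → K ^ 2 ≡ 1 [ZMOD Q] := fun h => by
    rw [Int.modEq_iff_dvd, show 1 - K ^ 2 = Q * (A ^ 2 * Q + 2 * A * K - A * Q - K) -
      ((A * Q + K) ^ 2 - (A * Q + K) * Q - 1) by ring]
    exact dvd_sub (dvd_mul_right _ _) ((dvd_pow_self Q two_ne_zero).trans h)
  suffices K ^ 2 ≡ 1 [ZMOD Q] → (Q ^ 2 ∣ (A * Q + K) ^ 2 - (A * Q + K) * Q - 1 ↔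
      2 * A ≡ 1 + K * ((1 - K ^ 2) / Q) [ZMOD Q]) from
    ⟨fun h => ⟨hK h, (this (hK h)).1 h⟩, fun ⟨h1, h2⟩ => (this h1).2 h2⟩
  intro h1
  obtain ⟨u, hu⟩ := h1.dvd
  rw [hu, Int.mul_ediv_cancel_left _ hQ,
    show (A * Q + K) ^ 2 - (A * Q + K) * Q - 1 = Q * (K * (2 * A - 1) - u) + Q ^ 2 * (A ^ 2 - A) by
      linear_combination -hu,
    dvd_add_left (dvd_mul_right _ _), sq, mul_dvd_mul_iff_left hQ, ← Int.modEq_iff_dvd,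
    Int.modEq_comm, Int.mul_modEq_iff_modEq_mul_of_sq_modEq_one h1, Int.modEq_iff_dvd,
    Int.modEq_iff_dvd, show 1 + K * u - 2 * A = K * u - (2 * A - 1) by ring]

theorem stmt_13_general (p q : ℕ) (hq : 2 ≤ q) (hpq : 4 * q ≤ p)
    (a0 k : ℕ) (ha0 : a0 = p / q) (hk : k = p - a0 * q) :
    ((∃ d : ℤ, d % 4 = 1 ∧ (2 * (p : ℝ) / q - 1 - 3 / (2 * (a0 : ℝ) * (q : ℝ) ^ 2)) ^ 2 < (d : ℝ) ∧
        (d : ℝ) < (2 * (p : ℝ) / q - 1) ^ 2) ↔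
      (Int.ModEq (q : ℤ) ((k : ℤ) ^ 2) 1 ∧
        Int.ModEq (q : ℤ) (2 * (a0 : ℤ)) (1 + (k : ℤ) * ((1 - (k : ℤ) ^ 2) / (q : ℤ))))) ∧
    ∀ d : ℤ, d % 4 = 1 → (2 * (p : ℝ) / q - 1 - 3 / (2 * (a0 : ℝ) * (q : ℝ) ^ 2)) ^ 2 < (d : ℝ) →
      (d : ℝ) < (2 * (p : ℝ) / q - 1) ^ 2 →
      (2 * (p : ℤ) - (q : ℤ)) ^ 2 - (q : ℤ) ^ 2 * d = 4 := by
  have hap : a0 * q ≤ p := ha0 ▸ Nat.div_mul_le_self p q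
  have hpa : p < (a0 + 1) * q := by
    rw [ha0, add_mul, one_mul]; exact Nat.lt_div_mul_add (by omega)
  have ha : 2 ≤ a0 := ha0 ▸ (Nat.le_div_iff_mul_le (by omega)).2 (by omega)
  have hpk : (p : ℤ) = a0 * q + k := by omega
  have window := lt_and_lt_iff_sq_sub_mul_eq_four hq ha hap hpa
  refine ⟨(exists_congr fun d => and_congr_right (window d)).trans ?_,
    fun d hd hl hu => (window d hd).1 ⟨hl, hu⟩⟩
  rw [exists_sq_sub_mul_eq_four_iff, hpk]
  exact sq_dvd_iff_modEq_s13 (by omega)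

/-- for coprime positive integers `p, q` with `q ≥ 2`, `p/q ≥ 4`,
`a_0 = ⌊p/q⌋`, `k = p - a_0 q`, the open interval `((2p/q - 1 - 3/(2 a_0 q²))², (2p/q - 1)²)`
contains an integer `≡ 1 (mod 4)` iff `k² ≡ 1 (mod q)` and `2a_0 ≡ 1 + k (1-k²)/q (mod q)`;
in that case it contains exactly one such integer, `d = 4(p² - pq - 1)/q² + 1`, which
satisfies `(2p - q)² - q² d = 4`, i.e. `N(p - q (1+√d)/2) = 1`. -/
theorem stmt_13 (p q : ℕ) (hq : 2 ≤ q) (hcop : Nat.Coprime p q) (hpq : 4 * q ≤ p)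
    (a0 k : ℕ) (ha0 : a0 = p / q) (hk : k = p - a0 * q) :
    ((∃ d : ℤ, d % 4 = 1 ∧ (2 * (p : ℝ) / q - 1 - 3 / (2 * (a0 : ℝ) * (q : ℝ) ^ 2)) ^ 2 < (d : ℝ) ∧
        (d : ℝ) < (2 * (p : ℝ) / q - 1) ^ 2) ↔
      (Int.ModEq (q : ℤ) ((k : ℤ) ^ 2) 1 ∧
        Int.ModEq (q : ℤ) (2 * (a0 : ℤ)) (1 + (k : ℤ) * ((1 - (k : ℤ) ^ 2) / (q : ℤ))))) ∧
    ∀ d : ℤ, d % 4 = 1 → (2 * (p : ℝ) / q - 1 - 3 / (2 * (a0 : ℝ) * (q : ℝ) ^ 2)) ^ 2 < (d : ℝ) →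
      (d : ℝ) < (2 * (p : ℝ) / q - 1) ^ 2 →
      (2 * (p : ℤ) - (q : ℤ)) ^ 2 - (q : ℤ) ^ 2 * d = 4 :=
  stmt_13_general p q hq hpq a0 k ha0 hk
end
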